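/- With the setup of the previous statement, for each fixed α ∈ (-1,1)\{0}, the functions b_{n+1}(z) converge locally uniformly on the open unit disk, as n → ∞, to b(z) = -2α/(r(z)+1-z). -/

import Mathlib

/-- Monic Geronimus polynomials `Φ_m` and their reciprocals `Φ_m^*`, defined by the
Szegő recurrence with constant recurrence coefficient `α`. -/
noncomputable def geronimusPhi (α : ℂ) : ℕ → (ℂ → ℂ) × (ℂ → ℂ)
  | 0 => (fun _ => 1, fun _ => 1)
  | m + 1 =>
      (fun z => z * (geronimusPhi α m).1 z - α * (geronimusPhi α m).2 z,
       fun z => (geronimusPhi α m).2 z - α * z * (geronimusPhi α m).1 z)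

/-!
The Szegő recursion has the constant transfer matrix `[[z, -α], [-α z, 1]]`, with eigenvalues
`λ± = (z + 1 ± r) / 2`. Hence `Φ_m` and `Φ_m^*` are explicit combinations of `λ₊^m` and `λ₋^m`, and
`b_{n+1}` is a fixed linear-fractional function of `ε^(n+1)`, `ε = λ₋ / λ₊`. On the disk
`|λ₋| < |λ₊|`: equality would force `r = i t (z + 1)` with `t` real, which turns `r² = (z - 1)² + 4α²z`
into a real palindromic quadratic in `z` without roots in the open disk, and the sign of
`|λ₊| - |λ₋|` is then fixed by connectedness from `z = 0`. So `ε^(n+1) → 0` locally uniformly and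
`b_{n+1}` tends to the ratio of the coefficients of `λ₊^m`, which is `-2α / (r + 1 - z)`.
-/

open Filter Topology Complex ComplexConjugate Metric

section LocallyUniform

variable {X 𝕜 ι : Type*} [TopologicalSpace X] [NormedDivisionRing 𝕜] {s : Set X} {l : Filter ι}

theorem tendstoLocallyUniformlyOn_pow_of_norm_lt_one {ε : X → 𝕜} (hε : ContinuousOn ε s)
    (hε1 : ∀ x ∈ s, ‖ε x‖ < 1) {k : ι → ℕ} (hk : Tendsto k l atTop) :
    TendstoLocallyUniformlyOn (fun n x => ε x ^ k n) 0 l s := by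
  refine tendstoLocallyUniformlyOn_of_forall_exists_nhds fun x hx => ?_
  obtain ⟨q, hxq, hq1⟩ := exists_between (hε1 x hx)
  refine ⟨{y | ‖ε y‖ < q}, (hε x hx).norm.eventually (gt_mem_nhds hxq), ?_⟩
  have hq : Tendsto (fun n => q ^ k n) l (𝓝 0) :=
    (tendsto_pow_atTop_nhds_zero_of_lt_one ((norm_nonneg _).trans hxq.le) hq1).comp hk
  refine Metric.tendstoUniformlyOn_iff.2 fun δ hδ => ?_
  filter_upwards [hq.eventually (gt_mem_nhds hδ)] with n hn y hy
  calc dist ((0 : X → 𝕜) y) (ε y ^ k n) = ‖ε y‖ ^ k n := by simp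
    _ ≤ q ^ k n := by gcongr
    _ < δ := hn

theorem tendstoLocallyUniformlyOn_add_mul_div_add_mul {e : ι → X → 𝕜}
    (he : TendstoLocallyUniformlyOn e 0 l s) {a b c d : X → 𝕜} (ha : ContinuousOn a s)
    (hb : ContinuousOn b s) (hc : ContinuousOn c s) (hd : ContinuousOn d s)
    (hc0 : ∀ x ∈ s, c x ≠ 0) :
    TendstoLocallyUniformlyOn (fun n x => (a x + b x * e n x) / (c x + d x * e n x))
      (fun x => a x / c x) l s := by
  have hconst (f : X → 𝕜) : TendstoLocallyUniformlyOn (fun _ : ι => f) f l s :=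
    fun u hu _ _ => ⟨Set.univ, univ_mem, .of_forall fun _ _ _ => refl_mem_uniformity hu⟩
  have hlim {f g : X → 𝕜} (hf : ContinuousOn f s) (hg : ContinuousOn g s) :
      TendstoLocallyUniformlyOn (fun n x => f x + g x * e n x) f l s := by
    simpa using (hconst f).fun_add ((hconst g).fun_mul₀ he hg continuousOn_const)
  exact (hlim ha hb).fun_div₀ (hlim hc hd) ha hc hc0

end LocallyUniform

theorem IsPreconnected.forall_pos_of_ne_zero {X : Type*} [TopologicalSpace X] {s : Set X}
    {f : X → ℝ} (hs : IsPreconnected s) (hf : ContinuousOn f s) (hf0 : ∀ x ∈ s, f x ≠ 0)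
    {x₀ : X} (hx₀ : x₀ ∈ s) (hpos : 0 < f x₀) : ∀ x ∈ s, 0 < f x := by
  intro x hx
  by_contra! hneg
  obtain ⟨y, hy, hy0⟩ := hs.intermediate_value hx hx₀ hf ⟨hneg, hpos.le⟩
  exact hf0 y hy hy0

theorem palindromic_quadratic_ne_zero {p q : ℝ} (hp : 0 < p) (hq : |q| ≤ 2 * p) {z : ℂ}
    (hz : ‖z‖ < 1) : p * z ^ 2 + q * z + p ≠ 0 := by
  intro h
  have hconj : p * conj z ^ 2 + q * conj z + p = 0 := by simpa using congrArg conj h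
  have hfactor : (z - conj z) * (p * (z + conj z) + q) = 0 := by linear_combination h - hconj
  rcases mul_eq_zero.mp hfactor with hreal | hsum
  · have him : z.im = 0 := conj_eq_iff_im.mp (sub_eq_zero.mp hreal).symm
    have hre : p * z.re ^ 2 + q * z.re + p = 0 := by
      simpa [pow_two, him] using congrArg re h
    have hx : |z.re| < 1 := (abs_re_le_norm z).trans_lt hz
    have hqx : -(q * z.re) ≤ 2 * p * |z.re| := by
      calc -(q * z.re) ≤ |q * z.re| := neg_le_abs _
        _ = |q| * |z.re| := abs_mul _ _
        _ ≤ 2 * p * |z.re| := by gcongr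
    nlinarith [mul_pos hp (pow_pos (sub_pos.2 hx) 2), sq_abs z.re]
  · have hunit : (p : ℂ) * (1 - z * conj z) = 0 := by linear_combination h - z * hsum
    have hnorm : ‖z‖ ^ 2 = 1 := by
      have := (mul_eq_zero.mp hunit).resolve_left (by exact_mod_cast hp.ne')
      rw [mul_conj, ← ofReal_one, ← ofReal_sub, ofReal_eq_zero, ← Complex.sq_norm] at this
      linarith
    nlinarith [norm_nonneg z]

theorem exists_eq_real_mul_I_mul_of_norm_add_eq_norm_sub {a c : ℂ} (ha : a ≠ 0)
    (h : ‖a + c‖ = ‖a - c‖) : ∃ t : ℝ, c = t * I * a := by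
  set u := c / a
  have hc : c = u * a := (div_mul_cancel₀ c ha).symm
  have hu : ‖1 + u‖ ^ 2 = ‖1 - u‖ ^ 2 := by
    rw [hc, ← one_add_mul, ← one_sub_mul, norm_mul, norm_mul] at h
    rw [mul_right_cancel₀ (norm_ne_zero_iff.mpr ha) h]
  have hre : u.re = 0 := by
    simp only [Complex.sq_norm, normSq_apply, add_re, sub_re, add_im, sub_im, one_re, one_im] at hu
    linarith
  refine ⟨u.im, hc.trans ?_⟩
  congr 1
  apply Complex.ext <;> simp [hre]

section ClosedForm

variable {α z s : ℂ}

theorem two_mul_geronimusPhi_eq (hs : s ^ 2 = (z - 1) ^ 2 + 4 * α ^ 2 * z) (m : ℕ) :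
    2 * s * (geronimusPhi α m).1 z = (s + z - 1 - 2 * α) * ((z + 1 + s) / 2) ^ m
        + (s - z + 1 + 2 * α) * ((z + 1 - s) / 2) ^ m ∧
    2 * s * (geronimusPhi α m).2 z = (s + 1 - z - 2 * α * z) * ((z + 1 + s) / 2) ^ m
        + (s - 1 + z + 2 * α * z) * ((z + 1 - s) / 2) ^ m := by
  induction m with
  | zero => simp only [geronimusPhi]; constructor <;> ring
  | succ m ih =>
    obtain ⟨ih₁, ih₂⟩ := ih
    simp only [geronimusPhi]
    constructor
    · linear_combination z * ih₁ - α * ih₂ +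
        ((((z + 1 - s) / 2) ^ m - ((z + 1 + s) / 2) ^ m) / 2) * hs
    · linear_combination ih₂ - α * z * ih₁ +
        ((((z + 1 - s) / 2) ^ m - ((z + 1 + s) / 2) ^ m) / 2) * hs

theorem geronimusPhi_div_eq (hs : s ^ 2 = (z - 1) ^ 2 + 4 * α ^ 2 * z)
    (hlt : ‖z + 1 - s‖ < ‖z + 1 + s‖) (m : ℕ) :
    (geronimusPhi α m).1 z / (geronimusPhi α m).2 z =
      ((s + z - 1 - 2 * α) + (s - z + 1 + 2 * α) * ((z + 1 - s) / (z + 1 + s)) ^ m) /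
        ((s + 1 - z - 2 * α * z) + (s - 1 + z + 2 * α * z) * ((z + 1 - s) / (z + 1 + s)) ^ m) := by
  have hs0 : 2 * s ≠ 0 := by
    rintro h
    obtain rfl : s = 0 := by simpa using h
    simp at hlt
  have hplus : z + 1 + s ≠ 0 := norm_pos_iff.mp ((norm_nonneg _).trans_lt hlt)
  have hminus : (z + 1 - s) / 2 = (z + 1 - s) / (z + 1 + s) * ((z + 1 + s) / 2) := by
    field_simp
  obtain ⟨h₁, h₂⟩ := two_mul_geronimusPhi_eq (α := α) hs m
  rw [hminus, mul_pow] at h₁ h₂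
  rw [← mul_div_mul_left _ _ hs0, h₁, h₂]
  simp only [← mul_assoc, ← add_mul]
  exact mul_div_mul_right _ _ (pow_ne_zero m (div_ne_zero hplus two_ne_zero))

end ClosedForm

theorem geronimus_norm_add_ne_norm_sub {α : ℝ} (hα : α ^ 2 ≤ 1) {z s : ℂ} (hz : ‖z‖ < 1)
    (hs : s ^ 2 = (z - 1) ^ 2 + 4 * (α : ℂ) ^ 2 * z) : ‖z + 1 + s‖ ≠ ‖z + 1 - s‖ := by
  intro h
  have hz1 : z + 1 ≠ 0 := by
    intro h0
    rw [eq_neg_of_add_eq_zero_left h0] at hz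
    simp at hz
  obtain ⟨t, rfl⟩ := exists_eq_real_mul_I_mul_of_norm_add_eq_norm_sub hz1 h
  refine palindromic_quadratic_ne_zero (p := 1 + t ^ 2) (q := 4 * α ^ 2 - 2 + 2 * t ^ 2)
    (by positivity) ?_ hz ?_
  · rw [abs_le]
    constructor <;> nlinarith [sq_nonneg t, sq_nonneg α]
  · push_cast
    linear_combination -hs + (t ^ 2 * (z + 1) ^ 2) * I_sq

theorem geronimus_norm_sub_lt_norm_add {α : ℝ} (hα : α ^ 2 ≤ 1) {r : ℂ → ℂ}
    (hr_cont : ContinuousOn r (ball 0 1))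
    (hr_sq : ∀ z ∈ ball (0 : ℂ) 1, r z ^ 2 = (z - 1) ^ 2 + 4 * (α : ℂ) ^ 2 * z)
    (hr0 : r 0 = 1) : ∀ z ∈ ball (0 : ℂ) 1, ‖z + 1 - r z‖ < ‖z + 1 + r z‖ := by
  intro z hz
  refine sub_pos.mp ((convex_ball (0 : ℂ) 1).isPreconnected.forall_pos_of_ne_zero
    (f := fun z => ‖z + 1 + r z‖ - ‖z + 1 - r z‖) (by fun_prop) (fun w hw => ?_)
    (mem_ball_self one_pos) ?_ z hz)
  · exact sub_ne_zero.mpr (geronimus_norm_add_ne_norm_sub hα (mem_ball_zero_iff.mp hw) (hr_sq w hw))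
  · norm_num [hr0]

theorem geronimus_coeff_ne_zero {α : ℝ} (hα1 : -1 < α) (hα0 : α ≠ 0) {r : ℂ → ℂ}
    (hr_sq : ∀ z ∈ ball (0 : ℂ) 1, r z ^ 2 = (z - 1) ^ 2 + 4 * (α : ℂ) ^ 2 * z)
    (hr0 : r 0 = 1) : ∀ z ∈ ball (0 : ℂ) 1, r z + 1 - z - 2 * α * z ≠ 0 := by
  intro z hz h
  have h' : 4 * (α : ℂ) * (1 + α) * z * (z - 1) = 0 := by
    linear_combination hr_sq z hz - (r z + z + 2 * α * z - 1) * h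
  have h1α : (1 + α : ℂ) ≠ 0 := by exact_mod_cast (neg_lt_iff_pos_add'.mp hα1).ne'
  rcases mul_eq_zero.mp h' with h' | h'
  · rcases mul_eq_zero.mp h' with h' | rfl
    · simp [hα0, h1α] at h'
    · norm_num [hr0] at h
  · rw [sub_eq_zero.mp h'] at hz
    simp at hz

theorem geronimus_limit_eqOn {α : ℝ} (hα1 : -1 < α) (hα0 : α ≠ 0) {r : ℂ → ℂ}
    (hr_sq : ∀ z ∈ ball (0 : ℂ) 1, r z ^ 2 = (z - 1) ^ 2 + 4 * (α : ℂ) ^ 2 * z)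
    (hr0 : r 0 = 1) :
    Set.EqOn (fun z => (r z + z - 1 - 2 * α) / (r z + 1 - z - 2 * α * z))
      (fun z => -2 * (α : ℂ) / (r z + 1 - z)) (ball (0 : ℂ) 1) := by
  intro z hz
  have hden : r z + 1 - z ≠ 0 := by
    intro h
    have h' : 4 * (α : ℂ) ^ 2 * z = 0 := by linear_combination (r z + z - 1) * h - hr_sq z hz
    obtain rfl : z = 0 := by simpa [hα0] using h'
    norm_num [hr0] at h
  rw [div_eq_div_iff (geronimus_coeff_ne_zero hα1 hα0 hr_sq hr0 z hz) hden]
  linear_combination hr_sq z hz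

theorem stmt_12 (α : ℝ) (hα : α ∈ Set.Ioo (-1 : ℝ) 1) (hα0 : α ≠ 0) (r : ℂ → ℂ)
    (hr_cont : ContinuousOn r (Metric.ball (0 : ℂ) 1))
    (hr_sq : ∀ z ∈ Metric.ball (0 : ℂ) 1, (r z) ^ 2 = (z - 1) ^ 2 + 4 * (α : ℂ) ^ 2 * z)
    (hr0 : r 0 = 1) :
    TendstoLocallyUniformlyOn
      (fun (n : ℕ) (z : ℂ) =>
        (geronimusPhi (α : ℂ) (n + 1)).1 z / (geronimusPhi (α : ℂ) (n + 1)).2 z)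
      (fun z => -2 * (α : ℂ) / (r z + 1 - z)) Filter.atTop (Metric.ball (0 : ℂ) 1) := by
  have hα2 : α ^ 2 ≤ 1 := by nlinarith [hα.1, hα.2]
  have hlt := geronimus_norm_sub_lt_norm_add hα2 hr_cont hr_sq hr0
  have hplus (z) (hz : z ∈ Metric.ball (0 : ℂ) 1) : z + 1 + r z ≠ 0 :=
    norm_pos_iff.mp ((norm_nonneg _).trans_lt (hlt z hz))
  have hε : ContinuousOn (fun z => (z + 1 - r z) / (z + 1 + r z)) (Metric.ball 0 1) :=
    by fun_prop (disch := assumption)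
  have hpow := tendstoLocallyUniformlyOn_pow_of_norm_lt_one hε
    (fun z hz => by
      rw [norm_div]
      exact (div_lt_one ((norm_nonneg _).trans_lt (hlt z hz))).2 (hlt z hz))
    (tendsto_add_atTop_nat 1)
  refine ((tendstoLocallyUniformlyOn_add_mul_div_add_mul hpow
    (a := fun z => r z + z - 1 - 2 * α) (b := fun z => r z - z + 1 + 2 * α)
    (c := fun z => r z + 1 - z - 2 * α * z) (d := fun z => r z - 1 + z + 2 * α * z)
    (by fun_prop) (by fun_prop) (by fun_prop) (by fun_prop)
    (geronimus_coeff_ne_zero hα.1 hα0 hr_sq hr0)).congr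
      fun n z hz => ?_).congr_right (geronimus_limit_eqOn hα.1 hα0 hr_sq hr0)
  exact (geronimusPhi_div_eq (hr_sq z hz) (hlt z hz) (n + 1)).symm
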